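/- arXiv:1101.3915 — 5 statements merged into one kernel-verified Lean document; each statement's English description precedes it below -/
import Mathlib

section
/- For every real s' > 8, setting Δ = s' + 2 − 2√(s'+1), one has √(s'+1) − (1/2)√(Δ·s') < 3 − 2√2 < 1. -/
/-! With `u = √(s'+1)` one has `Δ = (u - 1)²`, so `√(Δ s') = (u - 1)√s'` and the expression equals
`u - (u - 1)√s' / 2`. For `s' > 8` we have `u > 3` and `√s' > 2√2`, hence it is below
`u - (u - 1)√2 = √2 - (√2 - 1)u < √2 - 3(√2 - 1) = 3 - 2√2`. -/

namespace Real

lemma add_two_sub_two_mul_sqrt_add_one {s : ℝ} (hs : -1 ≤ s) :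
    s + 2 - 2 * √(s + 1) = (√(s + 1) - 1) ^ 2 := by
  have hsq : √(s + 1) ^ 2 = s + 1 := sq_sqrt (by linarith)
  linear_combination -hsq

lemma sqrt_add_two_sub_two_mul_sqrt_add_one_mul {s : ℝ} (hs : 0 ≤ s) :
    √((s + 2 - 2 * √(s + 1)) * s) = (√(s + 1) - 1) * √s := by
  have hu : 1 ≤ √(s + 1) := one_le_sqrt.mpr (by linarith)
  rw [add_two_sub_two_mul_sqrt_add_one (by linarith), sqrt_mul (sq_nonneg _),
    sqrt_sq (by linarith)]

lemma two_mul_sqrt_two_lt_sqrt {s : ℝ} (hs : 8 < s) : 2 * √2 < √s := by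
  have h8 : 2 * √2 = √8 := by
    rw [show (8 : ℝ) = 2 ^ 2 * 2 by norm_num, sqrt_mul (by norm_num), sqrt_sq (by norm_num)]
  rw [h8]
  exact sqrt_lt_sqrt (by norm_num) hs

lemma sub_half_mul_lt_three_sub_two_mul_sqrt_two {u t : ℝ} (hu : 3 < u) (ht : 2 * √2 < t) :
    u - 1 / 2 * ((u - 1) * t) < 3 - 2 * √2 := by
  nlinarith [one_lt_sqrt_two, mul_lt_mul_of_pos_left ht (show (0 : ℝ) < u - 1 by linarith)]

end Real

/-- For `s' > 8`, with `Δ = s' + 2 − 2√(s'+1)`: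
`√(s'+1) − (1/2)√(Δ·s') < 3 − 2√2 < 1`. -/
theorem stmt_6 (s' : ℝ) (hs' : 8 < s') :
    Real.sqrt (s' + 1) - (1 / 2) * Real.sqrt ((s' + 2 - 2 * Real.sqrt (s' + 1)) * s')
      < 3 - 2 * Real.sqrt 2 ∧
    3 - 2 * Real.sqrt 2 < 1 := by
  have hu : 3 < √(s' + 1) := Real.lt_sqrt_of_sq_lt (by linarith)
  refine ⟨?_, by linarith [Real.one_lt_sqrt_two]⟩
  rw [Real.sqrt_add_two_sub_two_mul_sqrt_add_one_mul (by linarith)]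
  exact Real.sub_half_mul_lt_three_sub_two_mul_sqrt_two hu (Real.two_mul_sqrt_two_lt_sqrt hs')
end

section
/- Let x0 > θ > 0 and let s' > max(8, 1 + x0²/θ²). Set s* = 2(√(s'+1) − 1) and Δ = s' − s*. Then θ√(s'+1) − x0 > 0 and Δ·s'·θ²/4 > (θ√(s'+1) − x0)²; consequently Δ²·θ²·s' > 4Δ·(θ√(s'+1) − x0)² (i.e., Q1(s') > Q1(s*)). -/
/-!
Write `r = √(s'+1)`. Then `Δ = s' - 2(r - 1) = (r - 1)²`, and `x0²/θ² < s'+1` gives `θr > x0`.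
Since `x0 > θ`, `0 < θr - x0 < θ(r - 1)`, so `(θr - x0)² < θ²Δ ≤ Δ s' θ²/4` because `s' ≥ 4`.
Multiplying by `4Δ > 0` gives the comparison of `Q1` at the two endpoints.
-/

lemma lt_mul_sqrt_of_sq_div_sq_lt {x θ s : ℝ} (hθ : 0 < θ) (hx : 0 ≤ x)
    (h : x ^ 2 / θ ^ 2 < s) : x < θ * Real.sqrt s := by
  have hxθ : x / θ < Real.sqrt s := (Real.lt_sqrt (div_nonneg hx hθ.le)).2 (by rwa [div_pow])
  rwa [div_lt_iff₀' hθ] at hxθ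

lemma sub_two_mul_sqrt_add_one_sub_one {s : ℝ} (hs : -1 ≤ s) :
    s - 2 * (Real.sqrt (s + 1) - 1) = (Real.sqrt (s + 1) - 1) ^ 2 := by
  have hr : Real.sqrt (s + 1) ^ 2 = s + 1 := Real.sq_sqrt (by linarith)
  linear_combination -hr

/-- For `x0 > θ > 0` and `s' > max(8, 1 + x0²/θ²)`, with `s* = 2(√(s'+1) − 1)` and
`Δ = s' − s*`: `θ√(s'+1) − x0 > 0`, `Δ·s'·θ²/4 > (θ√(s'+1) − x0)²`, and consequently
`Δ²θ²s' > 4Δ(θ√(s'+1) − x0)²`, i.e. `Q1(s') > Q1(s*)`. -/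
theorem stmt_7 (x0 θ s' : ℝ) (hθ : 0 < θ) (hx0 : θ < x0)
    (hs' : max 8 (1 + x0 ^ 2 / θ ^ 2) < s') :
    0 < θ * Real.sqrt (s' + 1) - x0 ∧
    (s' - 2 * (Real.sqrt (s' + 1) - 1)) * s' * θ ^ 2 / 4 >
      (θ * Real.sqrt (s' + 1) - x0) ^ 2 ∧
    (s' - 2 * (Real.sqrt (s' + 1) - 1)) ^ 2 * θ ^ 2 * s' >
      4 * (s' - 2 * (Real.sqrt (s' + 1) - 1)) * (θ * Real.sqrt (s' + 1) - x0) ^ 2 := by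
  have hs8 : 8 < s' := (le_max_left _ _).trans_lt hs'
  have hsx : 1 + x0 ^ 2 / θ ^ 2 < s' := (le_max_right _ _).trans_lt hs'
  have hΔ := sub_two_mul_sqrt_add_one_sub_one (s := s') (by linarith)
  set r := Real.sqrt (s' + 1)
  have hpos : 0 < θ * r - x0 :=
    sub_pos.2 (lt_mul_sqrt_of_sq_div_sq_lt hθ (hθ.trans hx0).le (by linarith))
  have hgap : θ * r - x0 < θ * (r - 1) := by linarith
  have hsq : (θ * r - x0) ^ 2 < θ ^ 2 * (r - 1) ^ 2 := by
    rw [← mul_pow]; exact pow_lt_pow_left₀ hgap hpos.le two_ne_zero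
  have hquarter : (s' - 2 * (r - 1)) * s' * θ ^ 2 / 4 > (θ * r - x0) ^ 2 := by
    rw [hΔ]; nlinarith [sq_nonneg (θ * (r - 1))]
  have hΔpos : 0 < s' - 2 * (r - 1) := by
    rw [hΔ]; exact pow_pos (by nlinarith) 2
  refine ⟨hpos, hquarter, ?_⟩
  nlinarith [mul_lt_mul_of_pos_left hquarter hΔpos]
end

section
/- Fix β > 0, σ > 0, x0 > θ > 0, constants 0 < η < ν < 1, and s' > max(8, 1 + x0²/θ²). Set s* = 2(√(s'+1) − 1), Δ = s' − s*, s1 = s* + ηΔ, s2 = s* + νΔ. Define a1 = (θ − x0)√(2β)/σ, b1 = (θ/2)√(2β)/σ, a2 = (√(2β)/σ)(θ√(s'+1) − x0), l1(s) = a1 + b1·s, and Q1(s) = (2σ²/β)(s'·l1(s)² − 2s·l1(s)·a2 + s·a2²). Then max(Q1(s1), Q1(s2)) ≤ Δ²·θ²·s'. -/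
/-!
Put `r = √(s' + 1)`, so that `s' = r² - 1`, `s* = 2(r - 1)` and `Δ = (r - 1)²`. Along the segment
`s = s* + uΔ` the form `Q1` becomes, with `A = θr - x0`,
`4(1 - u)ΔA(A + θuΔ) + s'θ²u²Δ²`,
and the hypotheses give `0 < A ≤ θ(r - 1)` and `r > 3`. The bound `Δ²θ²s'` minus this is
`Δ(1 - u)[(1 - u)(Δθ²s' - 4A²) + u(2Δθ²s' - 4A² - 4AθΔ)]`, with both brackets nonnegative.
-/

lemma quadForm_segment_eq {k c θ x0 r u s' s a1 b1 a2 : ℝ} (hkc : k * c ^ 2 = 4)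
    (hs' : s' = r ^ 2 - 1) (hs : s = 2 * (r - 1) + u * (r - 1) ^ 2)
    (ha1 : a1 = (θ - x0) * c) (hb1 : b1 = θ / 2 * c) (ha2 : a2 = c * (θ * r - x0)) :
    k * (s' * (a1 + b1 * s) ^ 2 - 2 * s * (a1 + b1 * s) * a2 + s * a2 ^ 2) =
      4 * (1 - u) * (r - 1) ^ 2 * (θ * r - x0) * ((θ * r - x0) + θ * u * (r - 1) ^ 2)
        + (r ^ 2 - 1) * θ ^ 2 * u ^ 2 * ((r - 1) ^ 2) ^ 2 := by
  subst hs' hs ha1 hb1 ha2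
  linear_combination ((1 - u) * (r - 1) ^ 2 * (θ * r - x0) * ((θ * r - x0) + θ * u * (r - 1) ^ 2)
    + (r ^ 2 - 1) * θ ^ 2 * u ^ 2 * ((r - 1) ^ 2) ^ 2 / 4) * hkc

lemma quadForm_segment_le {θ A r u : ℝ} (hθ : 0 ≤ θ) (hA : 0 ≤ A) (hAr : A ≤ θ * (r - 1))
    (hr : 1 ≤ r) (hr2 : 2 * r + 1 ≤ r ^ 2) (hu0 : 0 ≤ u) (hu1 : u ≤ 1) :
    4 * (1 - u) * (r - 1) ^ 2 * A * (A + θ * u * (r - 1) ^ 2)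
      + (r ^ 2 - 1) * θ ^ 2 * u ^ 2 * ((r - 1) ^ 2) ^ 2
      ≤ ((r - 1) ^ 2) ^ 2 * θ ^ 2 * (r ^ 2 - 1) := by
  set D := (r - 1) ^ 2 with hD
  have hD0 : 0 ≤ D := sq_nonneg _
  have hA2 : A ^ 2 ≤ θ ^ 2 * D := by rw [hD, ← mul_pow]; exact pow_le_pow_left₀ hA hAr 2
  have hAD : A * θ * D ≤ θ ^ 2 * (r - 1) * D := by
    have := mul_le_mul_of_nonneg_right hAr (mul_nonneg hθ hD0)
    linarith
  have hθD : 0 ≤ θ ^ 2 * D := by positivity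
  have first_nonneg : 0 ≤ D * θ ^ 2 * (r ^ 2 - 1) - 4 * A ^ 2 := by
    nlinarith [mul_le_mul_of_nonneg_left (show 4 ≤ r ^ 2 - 1 by nlinarith) hθD]
  have second_nonneg : 0 ≤ 2 * D * θ ^ 2 * (r ^ 2 - 1) - 4 * A ^ 2 - 4 * A * θ * D := by
    nlinarith [mul_le_mul_of_nonneg_left (show 2 * r ≤ r ^ 2 - 1 by linarith) hθD]
  have hu : 0 ≤ 1 - u := by linarith
  rw [← sub_nonneg]
  calc 0 ≤ D * (1 - u) * ((1 - u) * (D * θ ^ 2 * (r ^ 2 - 1) - 4 * A ^ 2)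
          + u * (2 * D * θ ^ 2 * (r ^ 2 - 1) - 4 * A ^ 2 - 4 * A * θ * D)) := by positivity
    _ = _ := by ring

/-- For `x0 > θ > 0`, `0 < η < ν < 1`, and `s' > max(8, 1 + x0²/θ²)`:
`max(Q1(s1), Q1(s2)) ≤ Δ²θ²s'` where `s1 = s* + ηΔ`, `s2 = s* + νΔ`. -/
theorem stmt_8 (β σ x0 θ η ν s' : ℝ) (hβ : 0 < β) (hσ : 0 < σ) (hθ : 0 < θ)
    (hx0 : θ < x0) (hη : 0 < η) (hην : η < ν) (hν : ν < 1)
    (hs' : max 8 (1 + x0 ^ 2 / θ ^ 2) < s')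
    (a1 b1 a2 sstar Δ s1 s2 : ℝ) (l1 Q1 : ℝ → ℝ)
    (ha1 : a1 = (θ - x0) * Real.sqrt (2 * β) / σ)
    (hb1 : b1 = (θ / 2) * Real.sqrt (2 * β) / σ)
    (ha2 : a2 = (Real.sqrt (2 * β) / σ) * (θ * Real.sqrt (s' + 1) - x0))
    (hsstar : sstar = 2 * (Real.sqrt (s' + 1) - 1))
    (hΔ : Δ = s' - sstar)
    (hs1 : s1 = sstar + η * Δ)
    (hs2 : s2 = sstar + ν * Δ)
    (hl1 : ∀ s, l1 s = a1 + b1 * s)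
    (hQ1 : ∀ s, Q1 s = (2 * σ ^ 2 / β) *
      (s' * (l1 s) ^ 2 - 2 * s * (l1 s) * a2 + s * a2 ^ 2)) :
    max (Q1 s1) (Q1 s2) ≤ Δ ^ 2 * θ ^ 2 * s' := by
  obtain ⟨hs8, hsx⟩ := max_lt_iff.mp hs'
  set r := Real.sqrt (s' + 1)
  have hr2 : r ^ 2 = s' + 1 := Real.sq_sqrt (by linarith)
  have hr3 : 3 < r := by nlinarith [Real.sqrt_nonneg (s' + 1)]
  have hxr : x0 < θ * r := by
    have : x0 ^ 2 < (θ * r) ^ 2 := by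
      have hx : x0 ^ 2 / θ ^ 2 < s' - 1 := by linarith
      rw [div_lt_iff₀ (by positivity)] at hx
      rw [mul_pow, hr2]; nlinarith
    exact lt_of_pow_lt_pow_left₀ 2 (by positivity) this
  set c := Real.sqrt (2 * β) / σ
  have hkc : 2 * σ ^ 2 / β * c ^ 2 = 4 := by
    rw [div_pow, Real.sq_sqrt (by positivity)]; field_simp; ring
  have hΔr : Δ = (r - 1) ^ 2 := by rw [hΔ, hsstar]; linear_combination -hr2
  have on_segment : ∀ u, 0 ≤ u → u ≤ 1 → Q1 (sstar + u * Δ) ≤ Δ ^ 2 * θ ^ 2 * s' := by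
    intro u hu0 hu1
    rw [hQ1, hl1, quadForm_segment_eq hkc (by linarith) (by rw [hsstar, hΔr])
      (by rw [ha1, mul_div_assoc]) (by rw [hb1, mul_div_assoc]) ha2,
      hΔr, show s' = r ^ 2 - 1 by linarith]
    exact quadForm_segment_le hθ.le (by linarith) (by linarith) (by linarith) (by nlinarith) hu0 hu1
  rw [hs1, hs2]
  exact max_le (on_segment η hη.le (by linarith)) (on_segment ν (by linarith) hν.le)
end

section
/- For every real B > 1, setting C = √(B² + 2B) − B, one has ((1 − C)/4)·exp(−2B/C) > exp(−4B)/(16B). -/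
open Real

lemma half_lt_sqrt_sq_add_two_mul_sub {B : ℝ} (hB : 1 / 4 < B) :
    1 / 2 < √(B ^ 2 + 2 * B) - B := by
  have h : B + 1 / 2 < √(B ^ 2 + 2 * B) :=
    (lt_sqrt (by linarith)).2 (by nlinarith)
  linarith

lemma inv_four_mul_lt_one_sub_sqrt_sq_add_two_mul_sub {B : ℝ} (hB : 1 ≤ B) :
    1 / (4 * B) < 1 - (√(B ^ 2 + 2 * B) - B) := by
  have hB0 : 0 < B := by linarith
  have hinv : 1 / (4 * B) ≤ 1 / 4 := by gcongr; linarith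
  have h : √(B ^ 2 + 2 * B) < B + 1 - 1 / (4 * B) := by
    refine (sqrt_lt' (by linarith)).2 ?_
    have hsq : (B + 1 - 1 / (4 * B)) ^ 2 - (B ^ 2 + 2 * B)
        = (B - 1) / (2 * B) + (1 / (4 * B)) ^ 2 := by
      field_simp
      ring
    have : 0 < (B - 1) / (2 * B) + (1 / (4 * B)) ^ 2 := by
      have : 0 ≤ (B - 1) / (2 * B) := div_nonneg (by linarith) (by positivity)
      positivity
    linarith
  linarith

/-- For `B > 1`, with `C = √(B² + 2B) − B`:
`((1 − C)/4)·exp(−2B/C) > exp(−4B)/(16B)`. -/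
theorem stmt_17 (B : ℝ) (hB : 1 < B) :
    ((1 - (Real.sqrt (B ^ 2 + 2 * B) - B)) / 4) *
      Real.exp (-2 * B / (Real.sqrt (B ^ 2 + 2 * B) - B)) >
    Real.exp (-4 * B) / (16 * B) := by
  set C := √(B ^ 2 + 2 * B) - B
  have hB0 : 0 < B := by linarith
  have hC : 1 / 2 < C := half_lt_sqrt_sq_add_two_mul_sub (by linarith)
  have hfactor : 1 / (16 * B) < (1 - C) / 4 := by
    have := inv_four_mul_lt_one_sub_sqrt_sq_add_two_mul_sub hB.le
    rw [show 1 / (16 * B) = 1 / (4 * B) / 4 by ring]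
    linarith
  have hexp : exp (-4 * B) < exp (-2 * B / C) := by
    rw [exp_lt_exp, neg_mul, neg_mul, neg_div, neg_lt_neg_iff, div_lt_iff₀ (by linarith)]
    nlinarith
  calc exp (-4 * B) / (16 * B) = 1 / (16 * B) * exp (-4 * B) := by ring
    _ < (1 - C) / 4 * exp (-2 * B / C) :=
      mul_lt_mul hfactor hexp.le (exp_pos _)
        ((by positivity : (0 : ℝ) < 1 / (16 * B)).trans hfactor).le
end

section
/- Fix β > 0, σ > 0, x0 > θ > 0, and let s' > max(8, 1 + x0²/θ², 8σ²/(βθ²)). Define a1 = (θ − x0)√(2β)/σ, b1 = (θ/2)√(2β)/σ, a2 = (√(2β)/σ)(θ√(s'+1) − x0), l1(s) = a1 + b1·s, s* = 2(√(s'+1) − 1), and g2(s') = (|a1|/(2π)) ∫_{s*}^{s'} (l1(s) − a2)·(s(s'−s))^{−3/2}·exp(−l1(s)²/(2s) − (l1(s)−a2)²/(2(s'−s))) ds. Then g2(s') > (512/(9π))·(x0/θ − 1)·(s')^{−6}·exp(−(β/32)(θ/σ)²·(s')³). -/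
/-!
Since `a₂ = l₁(s*)`, the integrand is `l₁(s) - a₂ = b₁ (s - s*)` times nonnegative factors, so
`g₂(s')` is at least the contribution of `[5s'/8, 3s'/4]`. There `b₁ (s - s*) ≥ b₁ s'/8`,
`(s (s' - s))^(-3/2) ≥ 8/s'³` and the exponent is at least `-27 b₁² s'/16`, whence
`g₂(s') ≥ (x0/θ - 1) b₁² exp(-27 b₁² s'/16) / (8π s')`, and the hypotheses on `s'` make this
exceed the claimed bound. Integrability near `s = s'` comes from `exp (-y) ≤ 2/y²`, which absorbs
the singularity of `(s' - s)^(-3/2)` into the Gaussian factor.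
-/

open Real Set MeasureTheory

lemma rpow_neg_three_halves {x : ℝ} (hx : 0 ≤ x) : x ^ (-(3:ℝ)/2) = (x * √x)⁻¹ := by
  rw [neg_div, rpow_neg hx, show (3:ℝ)/2 = 1 + 1/2 by norm_num, rpow_add' hx (by norm_num),
    rpow_one, ← sqrt_eq_rpow]

lemma exp_neg_le_two_div_sq {y : ℝ} (hy : 0 < y) : exp (-y) ≤ 2 / y ^ 2 := by
  have h := pow_div_factorial_le_exp y hy.le 2
  rw [Nat.factorial_two, Nat.cast_two] at h
  rw [exp_neg, ← inv_div]
  exact inv_anti₀ (by positivity) h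

lemma rpow_neg_three_halves_mul_exp_le {b d u : ℝ} (hb : 0 < b) (hd : 0 ≤ d) (hu : 0 ≤ u) :
    u ^ (-(3:ℝ)/2) * exp (-(b * d) ^ 2 / (2 * u)) ≤
      ((d + u) / 2) ^ (-(3:ℝ)/2) + 128 * √(d + u) / (b ^ 4 * (d + u) ^ 4) := by
  have h₁ : 0 ≤ ((d + u) / 2) ^ (-(3:ℝ)/2) := by positivity
  have h₂ : 0 ≤ 128 * √(d + u) / (b ^ 4 * (d + u) ^ 4) := by positivity
  rcases hu.eq_or_lt with rfl | hu
  · rw [zero_rpow (by norm_num), zero_mul]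
    positivity
  rcases le_total ((d + u) / 2) u with hu' | hd'
  · have hexp : exp (-(b * d) ^ 2 / (2 * u)) ≤ 1 :=
      exp_le_one_iff.mpr (div_nonpos_of_nonpos_of_nonneg (by nlinarith) (by positivity))
    calc u ^ (-(3:ℝ)/2) * exp (-(b * d) ^ 2 / (2 * u)) ≤ ((d + u) / 2) ^ (-(3:ℝ)/2) * 1 :=
          mul_le_mul (rpow_le_rpow_of_nonpos (by positivity) hu' (by norm_num)) hexp
            (exp_nonneg _) h₁
      _ ≤ _ := by linarith
  · have hd0 : 0 < d := by linarith
    have hexp : exp (-(b * d) ^ 2 / (2 * u)) ≤ 128 * u ^ 2 / (b ^ 4 * (d + u) ^ 4) := by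
      calc exp (-(b * d) ^ 2 / (2 * u)) = exp (-((b * d) ^ 2 / (2 * u))) := by rw [neg_div]
        _ ≤ 2 / ((b * d) ^ 2 / (2 * u)) ^ 2 := exp_neg_le_two_div_sq (by positivity)
        _ = 8 * u ^ 2 / (b ^ 4 * d ^ 4) := by field_simp; ring
        _ ≤ 128 * u ^ 2 / (b ^ 4 * (d + u) ^ 4) := by
          rw [div_le_div_iff₀ (by positivity) (by positivity)]
          have : (d + u) ^ 4 ≤ 16 * d ^ 4 := by
            have h2 : d + u ≤ 2 * d := by linarith
            calc (d + u) ^ 4 ≤ (2 * d) ^ 4 := by gcongr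
              _ = 16 * d ^ 4 := by ring
          have hbu : 0 ≤ 8 * u ^ 2 * b ^ 4 := by positivity
          nlinarith
    have hsq : u ^ (-(3:ℝ)/2) * u ^ 2 = √u := by
      rw [rpow_neg_three_halves hu.le]
      have := sq_sqrt hu.le
      field_simp
      nlinarith [sqrt_pos.mpr hu]
    calc u ^ (-(3:ℝ)/2) * exp (-(b * d) ^ 2 / (2 * u))
        ≤ u ^ (-(3:ℝ)/2) * (128 * u ^ 2 / (b ^ 4 * (d + u) ^ 4)) := by gcongr
      _ = 128 * √u / (b ^ 4 * (d + u) ^ 4) := by rw [← hsq]; ring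
      _ ≤ 128 * √(d + u) / (b ^ 4 * (d + u) ^ 4) := by gcongr; linarith
      _ ≤ _ := by linarith

-- The integrand of `g₂` for the line `l₁ s = a + b * s`.
noncomputable def passageIntegrand (a b a₂ s' s : ℝ) : ℝ :=
  (a + b * s - a₂) * (s * (s' - s)) ^ (-(3:ℝ)/2) *
    exp (-(a + b * s) ^ 2 / (2 * s) - (a + b * s - a₂) ^ 2 / (2 * (s' - s)))

section passageIntegrand

variable {a b s₀ s' s : ℝ}

lemma passageIntegrand_nonneg (hb : 0 ≤ b) (hs₀ : 0 ≤ s₀) (hs : s ∈ Icc s₀ s') :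
    0 ≤ passageIntegrand a b (a + b * s₀) s' s := by
  have hlin : a + b * s - (a + b * s₀) = b * (s - s₀) := by ring
  unfold passageIntegrand
  rw [hlin]
  have : 0 ≤ s * (s' - s) := mul_nonneg (by linarith [hs.1]) (by linarith [hs.2])
  have : 0 ≤ b * (s - s₀) := mul_nonneg hb (by linarith [hs.1])
  positivity

lemma passageIntegrand_le (hb : 0 < b) (hs₀ : 0 < s₀) (hs : s ∈ Icc s₀ s') :
    passageIntegrand a b (a + b * s₀) s' s ≤ b * (s' - s₀) * s₀ ^ (-(3:ℝ)/2) *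
      (((s' - s₀) / 2) ^ (-(3:ℝ)/2) + 128 * √(s' - s₀) / (b ^ 4 * (s' - s₀) ^ 4)) := by
  obtain ⟨h₀, h₁⟩ := hs
  have hlin : a + b * s - (a + b * s₀) = b * (s - s₀) := by ring
  have hsplit : (s * (s' - s)) ^ (-(3:ℝ)/2) = s ^ (-(3:ℝ)/2) * (s' - s) ^ (-(3:ℝ)/2) :=
    mul_rpow (by linarith) (by linarith)
  have hexp : exp (-(a + b * s) ^ 2 / (2 * s) - (b * (s - s₀)) ^ 2 / (2 * (s' - s))) ≤
      exp (-(b * (s - s₀)) ^ 2 / (2 * (s' - s))) := by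
    have : 0 ≤ (a + b * s) ^ 2 / (2 * s) := div_nonneg (sq_nonneg _) (by linarith)
    rw [exp_le_exp, neg_div, neg_div]
    linarith
  have hbound := rpow_neg_three_halves_mul_exp_le hb (sub_nonneg.mpr h₀) (sub_nonneg.mpr h₁)
  rw [show s - s₀ + (s' - s) = s' - s₀ by ring] at hbound
  unfold passageIntegrand
  rw [hlin, hsplit]
  have hb₀ : 0 ≤ b * (s' - s₀) * s₀ ^ (-(3:ℝ)/2) :=
    mul_nonneg (mul_nonneg hb.le (by linarith)) (rpow_nonneg hs₀.le _)
  have hu : 0 ≤ (s' - s) ^ (-(3:ℝ)/2) := rpow_nonneg (by linarith) _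
  calc b * (s - s₀) * (s ^ (-(3:ℝ)/2) * (s' - s) ^ (-(3:ℝ)/2)) *
        exp (-(a + b * s) ^ 2 / (2 * s) - (b * (s - s₀)) ^ 2 / (2 * (s' - s)))
      = (b * (s - s₀) * s ^ (-(3:ℝ)/2)) * ((s' - s) ^ (-(3:ℝ)/2) *
          exp (-(a + b * s) ^ 2 / (2 * s) - (b * (s - s₀)) ^ 2 / (2 * (s' - s)))) := by ring
    _ ≤ b * (s' - s₀) * s₀ ^ (-(3:ℝ)/2) *
          ((s' - s) ^ (-(3:ℝ)/2) * exp (-(b * (s - s₀)) ^ 2 / (2 * (s' - s)))) := by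
        refine mul_le_mul (mul_le_mul (by gcongr) (rpow_le_rpow_of_nonpos hs₀ h₀ (by norm_num))
          (rpow_nonneg (by linarith) _) (mul_nonneg hb.le (by linarith)))
          (mul_le_mul_of_nonneg_left hexp hu)
          (by positivity) hb₀
    _ ≤ _ := mul_le_mul_of_nonneg_left hbound hb₀

lemma intervalIntegrable_passageIntegrand (hb : 0 < b) (hs₀ : 0 < s₀) (hs₀s' : s₀ ≤ s') :
    IntervalIntegrable (passageIntegrand a b (a + b * s₀) s') volume s₀ s' := by
  rw [intervalIntegrable_iff_integrableOn_Ioc_of_le hs₀s']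
  apply Measure.integrableOn_of_bounded measure_Ioc_lt_top.ne
    (Measurable.aestronglyMeasurable (by unfold passageIntegrand; fun_prop))
  filter_upwards [ae_restrict_mem measurableSet_Ioc] with s hs
  rw [norm_of_nonneg (passageIntegrand_nonneg hb.le hs₀.le (Ioc_subset_Icc_self hs))]
  exact passageIntegrand_le hb hs₀ (Ioc_subset_Icc_self hs)

lemma passageIntegrand_ge (hb : 0 < b) (ha : a ∈ Icc (-(3 * b * s' / 4)) 0)
    (hs₀ : s₀ ∈ Ioc 0 (s' / 2))
    (hs : s ∈ Icc (5 * s' / 8) (3 * s' / 4)) :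
    b / s' ^ 2 * exp (-(27 * b ^ 2 * s' / 16)) ≤ passageIntegrand a b (a + b * s₀) s' s := by
  obtain ⟨ha₀, ha₁⟩ := ha
  obtain ⟨hs₁, hs₂⟩ := hs
  obtain ⟨hs₀, hs₀'⟩ := hs₀
  have hs' : 0 < s' := by linarith
  have hlin : a + b * s - (a + b * s₀) = b * (s - s₀) := by ring
  have hdrift : b * s' / 8 ≤ b * (s - s₀) := by nlinarith
  have hkernel : 8 / s' ^ 3 ≤ (s * (s' - s)) ^ (-(3:ℝ)/2) := by
    have hprod : s * (s' - s) ≤ (s' / 2) ^ 2 := by nlinarith [sq_nonneg (s' - 2 * s)]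
    calc 8 / s' ^ 3 = ((s' / 2) ^ 2) ^ (-(3:ℝ)/2) := by
          rw [rpow_neg_three_halves (by positivity), sqrt_sq (by positivity)]
          field_simp; ring
      _ ≤ _ := rpow_le_rpow_of_nonpos (mul_pos (by linarith) (by linarith)) hprod (by norm_num)
  have hexp : -(27 * b ^ 2 * s' / 16) ≤
      -(a + b * s) ^ 2 / (2 * s) - (b * (s - s₀)) ^ 2 / (2 * (s' - s)) := by
    have h₁ : (a + b * s) ^ 2 / (2 * s) ≤ 9 * b ^ 2 * s' / 16 := by
      rw [div_le_iff₀ (by linarith)]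
      have : (a + b * s) ^ 2 ≤ (3 * b * s' / 4) ^ 2 := sq_le_sq' (by nlinarith) (by nlinarith)
      nlinarith
    have h₂ : (b * (s - s₀)) ^ 2 / (2 * (s' - s)) ≤ 9 * b ^ 2 * s' / 8 := by
      rw [div_le_iff₀ (by linarith)]
      calc (b * (s - s₀)) ^ 2 = b ^ 2 * (s - s₀) ^ 2 := by ring
        _ ≤ b ^ 2 * (3 * s' / 4) ^ 2 :=
          mul_le_mul_of_nonneg_left (sq_le_sq' (by linarith) (by linarith)) (sq_nonneg b)
        _ ≤ 9 * b ^ 2 * s' / 8 * (2 * (s' - s)) := by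
          nlinarith [mul_nonneg (mul_nonneg (sq_nonneg b) hs'.le)
            (show 0 ≤ 2 * (s' - s) - s' / 2 by linarith)]
    rw [neg_div]
    linarith
  unfold passageIntegrand
  rw [hlin]
  calc b / s' ^ 2 * exp (-(27 * b ^ 2 * s' / 16))
      = b * s' / 8 * (8 / s' ^ 3) * exp (-(27 * b ^ 2 * s' / 16)) := by field_simp
    _ ≤ _ := by
      have : 0 ≤ b * (s - s₀) := mul_nonneg hb.le (by linarith)
      have : 0 ≤ (s * (s' - s)) ^ (-(3:ℝ)/2) := rpow_nonneg (by nlinarith) _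
      gcongr

lemma integral_passageIntegrand_ge (hb : 0 < b) (ha : a ∈ Icc (-(3 * b * s' / 4)) 0)
    (hs₀ : s₀ ∈ Ioc 0 (s' / 2)) :
    b * exp (-(27 * b ^ 2 * s' / 16)) / (8 * s') ≤
      ∫ s in s₀..s', passageIntegrand a b (a + b * s₀) s' s := by
  obtain ⟨hs₀, hs₀'⟩ := hs₀
  have hs' : 0 < s' := by linarith
  have hint := intervalIntegrable_passageIntegrand (a := a) hb hs₀ (by linarith)
  have hint_mid : IntervalIntegrable (passageIntegrand a b (a + b * s₀) s') volume
      (5 * s' / 8) (3 * s' / 4) := by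
    refine hint.mono_set ?_
    rw [uIcc_of_le (by linarith : 5 * s' / 8 ≤ 3 * s' / 4), uIcc_of_le (by linarith : s₀ ≤ s')]
    exact Icc_subset_Icc (by linarith) (by linarith)
  calc b * exp (-(27 * b ^ 2 * s' / 16)) / (8 * s')
      = ∫ _ in (5 * s' / 8)..(3 * s' / 4), b / s' ^ 2 * exp (-(27 * b ^ 2 * s' / 16)) := by
        rw [intervalIntegral.integral_const, smul_eq_mul]
        field_simp
        ring
    _ ≤ ∫ s in (5 * s' / 8)..(3 * s' / 4), passageIntegrand a b (a + b * s₀) s' s :=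
        intervalIntegral.integral_mono_on (by linarith) intervalIntegrable_const hint_mid
          (fun s hs => passageIntegrand_ge hb ha ⟨hs₀, hs₀'⟩ hs)
    _ ≤ ∫ s in s₀..s', passageIntegrand a b (a + b * s₀) s' s := by
        refine intervalIntegral.integral_mono_interval (by linarith) (by linarith) (by linarith)
          ?_ hint
        filter_upwards [ae_restrict_mem measurableSet_Ioc] with s hs
        exact passageIntegrand_nonneg hb.le hs₀.le (Ioc_subset_Icc_self hs)

end passageIntegrand

lemma two_mul_sqrt_add_one_sub_one_mem_Ioc {x : ℝ} (hx : 8 ≤ x) :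
    2 * (√(x + 1) - 1) ∈ Ioc 0 (x / 2) := by
  have h₁ : 1 < √(x + 1) := (lt_sqrt zero_le_one).2 (by linarith)
  have h₂ : √(x + 1) ≤ x / 4 + 1 := (sqrt_le_left (by linarith)).2 (by nlinarith)
  exact ⟨by linarith, by linarith⟩

lemma div_sub_one_le_of_one_add_sq_div_sq_lt {x θ s : ℝ} (hθ : 0 < θ)
    (h : 1 + x ^ 2 / θ ^ 2 < s) : x / θ - 1 ≤ 3 * s / 8 := by
  have hx : x ^ 2 < (θ * (1 + 3 * s / 8)) ^ 2 := by
    have := (div_lt_iff₀ (by positivity)).1 (show x ^ 2 / θ ^ 2 < s - 1 by linarith)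
    nlinarith [sq_nonneg θ, sq_nonneg (3 * s / 8)]
  have hs : 1 < s := by have := div_nonneg (sq_nonneg x) (sq_nonneg θ); linarith
  rw [sub_le_iff_le_add, div_le_iff₀ hθ]
  nlinarith [abs_lt_of_sq_lt_sq' hx (by positivity)]

lemma rpow_neg_six_mul_exp_lt {b q s : ℝ} (hb : 0 < b) (hq : 0 < q) (hs : 8 < s)
    (hbs : 4 < b ^ 2 * s) :
    512 / (9 * π) * q * s ^ (-(6:ℝ)) * exp (-(b ^ 2 * s ^ 3 / 16)) <
      2 * b * q / (2 * π) * (b * exp (-(27 * b ^ 2 * s / 16)) / (8 * s)) := by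
  have hexp : exp (-(b ^ 2 * s ^ 3 / 16)) ≤ exp (-(27 * b ^ 2 * s / 16)) := by
    rw [exp_le_exp, neg_le_neg_iff]
    have : 27 * s ≤ s ^ 3 := by
      nlinarith [mul_le_mul_of_nonneg_left (show 27 ≤ s ^ 2 by nlinarith) (show 0 ≤ s by linarith)]
    nlinarith [sq_nonneg b]
  have hpoly : 512 / (9 * s ^ 6) < b ^ 2 / (8 * s) := by
    rw [div_lt_div_iff₀ (by positivity) (by positivity)]
    have : 64 < s ^ 2 := by nlinarith
    have : 4096 < s ^ 4 := by nlinarith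
    nlinarith [pow_pos (by linarith : (0:ℝ) < s) 5]
  rw [rpow_neg (by linarith), show (6:ℝ) = (6:ℕ) by norm_num, rpow_natCast]
  calc 512 / (9 * π) * q * (s ^ 6)⁻¹ * exp (-(b ^ 2 * s ^ 3 / 16))
      ≤ q * exp (-(27 * b ^ 2 * s / 16)) / π * (512 / (9 * s ^ 6)) := by
        rw [show 512 / (9 * π) * q * (s ^ 6)⁻¹ * exp (-(b ^ 2 * s ^ 3 / 16)) =
          q * exp (-(b ^ 2 * s ^ 3 / 16)) / π * (512 / (9 * s ^ 6)) by field_simp]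
        gcongr
    _ < q * exp (-(27 * b ^ 2 * s / 16)) / π * (b ^ 2 / (8 * s)) := by gcongr
    _ = _ := by field_simp

/-- Lemma 3 of the paper: for `s' > max(8, 1 + x0²/θ², 8σ²/(βθ²))`, the integral lower
bound `g2(s')` for the first-passage density satisfies
`g2(s') > (512/(9π))(x0/θ − 1)(s')⁻⁶ exp(−(β/32)(θ/σ)²(s')³)`. -/
theorem stmt_18 (β σ x0 θ s' : ℝ) (hβ : 0 < β) (hσ : 0 < σ) (hθ : 0 < θ)
    (hx0 : θ < x0)
    (hs' : max (max 8 (1 + x0 ^ 2 / θ ^ 2)) (8 * σ ^ 2 / (β * θ ^ 2)) < s')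
    (a1 b1 a2 sstar : ℝ) (l1 : ℝ → ℝ) (g2 : ℝ)
    (ha1 : a1 = (θ - x0) * Real.sqrt (2 * β) / σ)
    (hb1 : b1 = (θ / 2) * Real.sqrt (2 * β) / σ)
    (ha2 : a2 = (Real.sqrt (2 * β) / σ) * (θ * Real.sqrt (s' + 1) - x0))
    (hsstar : sstar = 2 * (Real.sqrt (s' + 1) - 1))
    (hl1 : ∀ s, l1 s = a1 + b1 * s)
    (hg2 : g2 = (|a1| / (2 * Real.pi)) *
      ∫ s in sstar..s', (l1 s - a2) * (s * (s' - s)) ^ (-(3 : ℝ) / 2) *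
        Real.exp (-(l1 s) ^ 2 / (2 * s) - (l1 s - a2) ^ 2 / (2 * (s' - s)))) :
    g2 > (512 / (9 * Real.pi)) * (x0 / θ - 1) * s' ^ (-(6 : ℝ)) *
      Real.exp (-(β / 32) * (θ / σ) ^ 2 * s' ^ 3) := by
  obtain ⟨⟨h8, hx0s'⟩, hσs'⟩ := by simpa only [max_lt_iff] using hs'
  have hb1pos : 0 < b1 := by rw [hb1]; positivity
  have hb1sq : b1 ^ 2 = β * θ ^ 2 / (2 * σ ^ 2) := by
    rw [hb1, div_pow, mul_pow, sq_sqrt (by positivity)]; ring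
  have hb1s' : 4 < b1 ^ 2 * s' := by
    rw [div_lt_iff₀ (by positivity)] at hσs'
    rw [hb1sq, div_mul_eq_mul_div, lt_div_iff₀ (by positivity)]
    linarith
  have ha2' : a2 = a1 + b1 * sstar := by rw [ha2, ha1, hb1, hsstar]; ring
  have ha1' : a1 = -(2 * b1 * (x0 / θ - 1)) := by rw [ha1, hb1]; field_simp; ring
  have hq : 0 < x0 / θ - 1 := by rw [sub_pos, one_lt_div hθ]; exact hx0
  have ha1mem : a1 ∈ Icc (-(3 * b1 * s' / 4)) 0 := by
    have := div_sub_one_le_of_one_add_sq_div_sq_lt hθ hx0s'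
    rw [ha1']
    constructor <;> nlinarith
  have hI := integral_passageIntegrand_ge hb1pos ha1mem
    (hsstar ▸ two_mul_sqrt_add_one_sub_one_mem_Ioc h8.le)
  have hexp : -(β / 32) * (θ / σ) ^ 2 * s' ^ 3 = -(b1 ^ 2 * s' ^ 3 / 16) := by
    rw [hb1sq]; field_simp; ring
  have habs : |a1| = 2 * b1 * (x0 / θ - 1) := by rw [ha1', abs_neg, abs_of_pos (by positivity)]
  simp only [hl1, ha2'] at hg2
  rw [hg2, gt_iff_lt, hexp, habs]
  exact (rpow_neg_six_mul_exp_lt hb1pos hq h8 hb1s').trans_le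
    (mul_le_mul_of_nonneg_left hI (by positivity))
end
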